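/- For every n ≥ 1 and every f : {-1,1}^n → ℝ, the log-Sobolev inequality D(f,f) ≥ (1/n)·Ent(f²) holds; i.e., the log-Sobolev constant of the discrete cube {-1,1}^n is at least 1/n. -/

import Mathlib

noncomputable section

/-- The real value `±1` associated with a Boolean coordinate (`true ↦ 1`, `false ↦ -1`). -/
def sgn (b : Bool) : ℝ := if b then 1 else -1

/-- Expectation over the uniform probability measure on the hypercube `{-1,1}^n`,
identified with `Fin n → Bool`. -/
def cubeExpect {n : ℕ} (f : (Fin n → Bool) → ℝ) : ℝ :=
  (∑ x : Fin n → Bool, f x) / 2 ^ n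

/-- The Fourier character `χ_S(x) = ∏_{i ∈ S} x_i`. -/
def chi {n : ℕ} (S : Finset (Fin n)) (x : Fin n → Bool) : ℝ :=
  ∏ i ∈ S, sgn (x i)

/-- The Fourier coefficient `f̂(S) = E[f(x) χ_S(x)]`. -/
def fourierCoef {n : ℕ} (f : (Fin n → Bool) → ℝ) (S : Finset (Fin n)) : ℝ :=
  cubeExpect fun x => f x * chi S x

/-- The noise operator `T_ρ f = Σ_S ρ^{|S|} f̂(S) χ_S` (with `0^0 = 1`). -/
def noiseOp {n : ℕ} (ρ : ℝ) (f : (Fin n → Bool) → ℝ) (x : Fin n → Bool) : ℝ :=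
  ∑ S : Finset (Fin n), ρ ^ S.card * fourierCoef f S * chi S x

/-- The normalized `ℓ_p` norm `‖f‖_p = (E |f|^p)^{1/p}`. -/
def cubeNorm {n : ℕ} (p : ℝ) (f : (Fin n → Bool) → ℝ) : ℝ :=
  (cubeExpect fun x => |f x| ^ p) ^ (1 / p)

/-- `x` with its `i`-th coordinate negated. -/
def flipAt {n : ℕ} (x : Fin n → Bool) (i : Fin n) : Fin n → Bool :=
  Function.update x i (!(x i))

/-- The Dirichlet form `D(f,g) = ½ E_{x,i}[(f(x) − f(x^{⊕i}))(g(x) − g(x^{⊕i}))]`,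
with `x` uniform on the cube and `i` uniform on the coordinates. -/
def dirichletForm {n : ℕ} (f g : (Fin n → Bool) → ℝ) : ℝ :=
  (1/2) * cubeExpect fun x =>
    (∑ i : Fin n, (f x - f (flipAt x i)) * (g x - g (flipAt x i))) / n

/-- The entropy `Ent(g) = E[g log g] − (E g) log (E g)` (with `0 log 0 = 0`,
as `Real.log 0 = 0`). -/
def cubeEntropy {n : ℕ} (g : (Fin n → Bool) → ℝ) : ℝ :=
  cubeExpect (fun x => g x * Real.log (g x)) - cubeExpect g * Real.log (cubeExpect g)

/-- The variance `Var(f) = E[f²] − (E f)²`. -/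
def cubeVar {n : ℕ} (f : (Fin n → Bool) → ℝ) : ℝ :=
  cubeExpect (fun x => f x ^ 2) - (cubeExpect f) ^ 2

/-- The influence of coordinate `i`: `Inf_i(f) = Σ_{S ∋ i} f̂(S)²`. -/
def influence {n : ℕ} (i : Fin n) (f : (Fin n → Bool) → ℝ) : ℝ :=
  ∑ S ∈ Finset.univ.filter (fun S : Finset (Fin n) => i ∈ S), fourierCoef f S ^ 2

/-! Splitting on the first coordinate, `Ent(f²)` is the average of the entropies of the two
slices `f₊, f₋` plus the two-point entropy of `(u, v) = (E f₊², E f₋²)`. The two-point inequality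
bounds the latter by `(u + v) / 2 - √(u v)`, which is at most `E (f₊ - f₋)² / 2` by
Cauchy–Schwarz; hence, by induction on `n`, `Ent(f²) ≤ ½ E Σᵢ (f x - f x^{⊕i})² = n · D(f, f)`.

Writing `u = m (1 + r)`, `v = m (1 - r)`, the two-point inequality reduces to an inequality in
`r ∈ [0, 1]` whose derivative is `sinh (artanh r) - artanh r ≥ 0`. -/

open Real

section TwoPoint

open Set

lemma artanh_le_div_sqrt {r : ℝ} (h0 : 0 ≤ r) (h1 : r < 1) : artanh r ≤ r / √(1 - r ^ 2) :=
  (self_le_sinh_iff.2 (artanh_nonneg h0)).trans_eq (sinh_artanh ⟨by linarith, h1⟩)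

lemma artanh_eq_half_sub_log {x : ℝ} (hx : x ∈ Ioo (-1) 1) :
    artanh x = (log (1 + x) - log (1 - x)) / 2 := by
  obtain ⟨h₁, h₂⟩ := hx
  rw [artanh_eq_half_log ⟨h₁.le, h₂.le⟩, log_div (by linarith) (by linarith)]
  ring

lemma hasDerivAt_one_sub_sqrt_sub_mul_log {x : ℝ} (hx : x ∈ Ioo (-1) 1) :
    HasDerivAt (fun x => 1 - √(1 - x ^ 2) - ((1 + x) * log (1 + x) + (1 - x) * log (1 - x)) / 2)
      (x / √(1 - x ^ 2) - artanh x) x := by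
  obtain ⟨h₁, h₂⟩ := hx
  have hpos : 0 < 1 - x ^ 2 := by nlinarith
  have hsq : HasDerivAt (fun x : ℝ => 1 - x ^ 2) (-(2 * x)) x := by
    simpa using (hasDerivAt_pow 2 x).const_sub 1
  have hsqrt := hsq.sqrt hpos.ne'
  have hp : HasDerivAt (fun x : ℝ => (1 + x) * log (1 + x)) (log (1 + x) + 1) x :=
    (hasDerivAt_mul_log (by linarith)).comp_const_add 1 x
  have hm : HasDerivAt (fun x : ℝ => (1 - x) * log (1 - x)) (-(log (1 - x) + 1)) x :=
    (hasDerivAt_mul_log (by linarith)).comp_const_sub 1 x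
  refine ((hsqrt.const_sub 1).sub ((hp.add hm).div_const 2)).congr_deriv ?_
  rw [artanh_eq_half_sub_log ⟨h₁, h₂⟩]
  field_simp
  ring

lemma one_add_mul_log_add_one_sub_mul_log_le {r : ℝ} (h0 : 0 ≤ r) (h1 : r ≤ 1) :
    ((1 + r) * log (1 + r) + (1 - r) * log (1 - r)) / 2 ≤ 1 - √(1 - r ^ 2) := by
  let φ : ℝ → ℝ :=
    fun x => 1 - √(1 - x ^ 2) - ((1 + x) * log (1 + x) + (1 - x) * log (1 - x)) / 2
  have hφ : MonotoneOn φ (Icc 0 1) := by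
    refine monotoneOn_of_hasDerivWithinAt_nonneg (f' := fun x => x / √(1 - x ^ 2) - artanh x)
      (convex_Icc 0 1) ?_ (fun x hx => ?_) (fun x hx => ?_)
    · have hmul_log := continuous_mul_log
      fun_prop
    · rw [interior_Icc] at hx
      exact (hasDerivAt_one_sub_sqrt_sub_mul_log ⟨by linarith [hx.1], hx.2⟩).hasDerivWithinAt
    · rw [interior_Icc] at hx
      exact sub_nonneg.2 (artanh_le_div_sqrt hx.1.le hx.2)
  have := hφ ⟨le_rfl, zero_le_one⟩ ⟨h0, h1⟩ h0
  simp only [φ] at this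
  norm_num at this
  linarith

def twoPointEntropy (u v : ℝ) : ℝ :=
  (u * log u + v * log v) / 2 - (u + v) / 2 * log ((u + v) / 2)

lemma twoPointEntropy_comm (u v : ℝ) : twoPointEntropy u v = twoPointEntropy v u := by
  simp only [twoPointEntropy, add_comm]

-- No positivity is needed: both sides vanish when `m = 0` or `a = 0`, as `log 0 = 0`.
lemma mul_mul_log_mul (m a : ℝ) : m * a * log (m * a) = a * (m * log m) + m * (a * log a) := by
  have := negMulLog_mul m a
  simp only [negMulLog] at this
  linarith

lemma twoPointEntropy_le {u v : ℝ} (hu : 0 ≤ u) (hv : 0 ≤ v) :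
    twoPointEntropy u v ≤ (u + v) / 2 - √(u * v) := by
  wlog hvu : v ≤ u generalizing u v
  · rw [twoPointEntropy_comm, add_comm, mul_comm]
    exact this hv hu (le_of_not_ge hvu)
  obtain huv | huv := (add_nonneg hu hv).eq_or_lt
  · obtain ⟨rfl, rfl⟩ : u = 0 ∧ v = 0 := ⟨by linarith, by linarith⟩
    simp [twoPointEntropy]
  set m := (u + v) / 2
  set r := (u - v) / (u + v)
  have hu' : u = m * (1 + r) := by simp only [m, r]; field_simp; ring
  have hv' : v = m * (1 - r) := by simp only [m, r]; field_simp; ring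
  have hr : r ≤ 1 := (div_le_one huv).2 (by linarith)
  have hm : 0 ≤ m := by positivity
  calc twoPointEntropy u v
      = m * (((1 + r) * log (1 + r) + (1 - r) * log (1 - r)) / 2) := by
        rw [twoPointEntropy, hu', hv', mul_mul_log_mul, mul_mul_log_mul]
        ring_nf
    _ ≤ m * (1 - √(1 - r ^ 2)) :=
        mul_le_mul_of_nonneg_left (one_add_mul_log_add_one_sub_mul_log_le (by positivity) hr) hm
    _ = (u + v) / 2 - √(u * v) := by
        rw [hu', hv', show m * (1 + r) * (m * (1 - r)) = m ^ 2 * (1 - r ^ 2) by ring,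
          sqrt_mul (sq_nonneg m), sqrt_sq hm]
        ring

end TwoPoint

section Cube

open Finset

variable {n : ℕ}

lemma cubeExpect_add (f g : (Fin n → Bool) → ℝ) :
    cubeExpect (fun x => f x + g x) = cubeExpect f + cubeExpect g := by
  simp only [cubeExpect, sum_add_distrib, add_div]

lemma cubeExpect_nonneg {f : (Fin n → Bool) → ℝ} (hf : ∀ x, 0 ≤ f x) :
    0 ≤ cubeExpect f :=
  div_nonneg (sum_nonneg fun x _ => hf x) (by positivity)

lemma cubeExpect_sub_sq (p q : (Fin n → Bool) → ℝ) :
    cubeExpect (fun y => (p y - q y) ^ 2) =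
      cubeExpect (fun y => p y ^ 2) + cubeExpect (fun y => q y ^ 2)
        - 2 * cubeExpect (fun y => p y * q y) := by
  simp only [cubeExpect, sub_sq, sum_add_distrib, sum_sub_distrib, mul_assoc, ← mul_sum]
  ring

lemma cubeExpect_mul_le_sqrt (p q : (Fin n → Bool) → ℝ) :
    cubeExpect (fun y => p y * q y) ≤
      √(cubeExpect (fun y => p y ^ 2) * cubeExpect (fun y => q y ^ 2)) := by
  refine (le_abs_self _).trans (abs_le_sqrt ?_)
  simp only [cubeExpect, div_pow, div_mul_div_comm, ← pow_two]
  exact div_le_div_of_nonneg_right (sum_mul_sq_le_sq_mul_sq _ p q) (by positivity)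

-- Reducible, so that `ring` and `linarith` identify `cubeSlice (fun x => φ (f x)) b` with
-- `fun y => φ (cubeSlice f b y)`.
abbrev cubeSlice (f : (Fin (n + 1) → Bool) → ℝ) (b : Bool) : (Fin n → Bool) → ℝ :=
  fun y => f (Fin.cons b y)

lemma cubeExpect_succ (f : (Fin (n + 1) → Bool) → ℝ) :
    cubeExpect f = (cubeExpect (cubeSlice f true) + cubeExpect (cubeSlice f false)) / 2 := by
  have h : ∑ p : Bool × (Fin n → Bool), f (Fin.cons p.1 p.2) = ∑ x, f x :=
    Fintype.sum_equiv (Fin.consEquiv fun _ => Bool) _ _ fun _ => rfl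
  simp only [cubeExpect, cubeSlice, ← h, Fintype.sum_prod_type, Fintype.sum_bool, pow_succ]
  field_simp

lemma flipAt_cons_zero (b : Bool) (y : Fin n → Bool) :
    flipAt (Fin.cons b y) 0 = Fin.cons (!b) y := by
  simp only [flipAt]
  rw [Fin.cons_zero, Fin.update_cons_zero]

lemma flipAt_cons_succ (b : Bool) (y : Fin n → Bool) (i : Fin n) :
    flipAt (Fin.cons b y) i.succ = Fin.cons b (flipAt y i) := by
  simp only [flipAt]
  rw [Fin.cons_succ, Fin.cons_update]

def edgeEnergy (f : (Fin n → Bool) → ℝ) : ℝ :=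
  cubeExpect fun x => ∑ i, (f x - f (flipAt x i)) ^ 2

lemma dirichletForm_self (f : (Fin n → Bool) → ℝ) :
    dirichletForm f f = edgeEnergy f / 2 / n := by
  simp only [dirichletForm, edgeEnergy, cubeExpect, ← pow_two, ← sum_div]
  ring

lemma cubeSlice_sum_sq_sub_flipAt (f : (Fin (n + 1) → Bool) → ℝ) (b : Bool) :
    cubeSlice (fun x => ∑ i, (f x - f (flipAt x i)) ^ 2) b = fun y =>
      (cubeSlice f b y - cubeSlice f (!b) y) ^ 2
        + ∑ i, (cubeSlice f b y - cubeSlice f b (flipAt y i)) ^ 2 := by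
  ext y
  simp only [cubeSlice, Fin.sum_univ_succ, flipAt_cons_zero, flipAt_cons_succ]

lemma edgeEnergy_succ (f : (Fin (n + 1) → Bool) → ℝ) :
    edgeEnergy f = cubeExpect (fun y => (cubeSlice f true y - cubeSlice f false y) ^ 2)
      + (edgeEnergy (cubeSlice f true) + edgeEnergy (cubeSlice f false)) / 2 := by
  have hcomm : (cubeExpect fun y => (cubeSlice f false y - cubeSlice f true y) ^ 2) =
      cubeExpect fun y => (cubeSlice f true y - cubeSlice f false y) ^ 2 := by
    simp only [sub_sq_comm]
  rw [edgeEnergy, cubeExpect_succ, cubeSlice_sum_sq_sub_flipAt, cubeSlice_sum_sq_sub_flipAt,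
    cubeExpect_add, cubeExpect_add, Bool.not_true, Bool.not_false, hcomm, edgeEnergy, edgeEnergy]
  ring

lemma cubeEntropy_succ (g : (Fin (n + 1) → Bool) → ℝ) :
    cubeEntropy g = (cubeEntropy (cubeSlice g true) + cubeEntropy (cubeSlice g false)) / 2
      + twoPointEntropy (cubeExpect (cubeSlice g true)) (cubeExpect (cubeSlice g false)) := by
  simp only [cubeEntropy, twoPointEntropy, cubeExpect_succ g,
    cubeExpect_succ fun x => g x * log (g x)]
  ring

lemma twoPointEntropy_expect_sq_le (p q : (Fin n → Bool) → ℝ) :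
    twoPointEntropy (cubeExpect fun y => p y ^ 2) (cubeExpect fun y => q y ^ 2) ≤
      cubeExpect (fun y => (p y - q y) ^ 2) / 2 := by
  have h := twoPointEntropy_le (cubeExpect_nonneg fun y => sq_nonneg (p y))
    (cubeExpect_nonneg fun y => sq_nonneg (q y))
  rw [cubeExpect_sub_sq]
  linarith [cubeExpect_mul_le_sqrt p q]

theorem cubeEntropy_sq_le_edgeEnergy (f : (Fin n → Bool) → ℝ) :
    cubeEntropy (fun x => f x ^ 2) ≤ edgeEnergy f / 2 := by
  induction n with
  | zero => simp [cubeEntropy, edgeEnergy, cubeExpect]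
  | succ n ih =>
    have hT : cubeEntropy (cubeSlice (fun x => f x ^ 2) true) ≤
        edgeEnergy (cubeSlice f true) / 2 := ih _
    have hF : cubeEntropy (cubeSlice (fun x => f x ^ 2) false) ≤
        edgeEnergy (cubeSlice f false) / 2 := ih _
    have h2 := twoPointEntropy_expect_sq_le (cubeSlice f true) (cubeSlice f false)
    rw [cubeEntropy_succ, edgeEnergy_succ]
    linarith

end Cube

theorem cube_logSobolev_general (n : ℕ) (f : (Fin n → Bool) → ℝ) :
    (1 / (n : ℝ)) * cubeEntropy (fun x => f x ^ 2) ≤ dirichletForm f f := by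
  rw [dirichletForm_self, one_div_mul_eq_div]
  exact div_le_div_of_nonneg_right (cubeEntropy_sq_le_edgeEnergy f) n.cast_nonneg

/-- **Log-Sobolev inequality for the discrete cube**: for every `n ≥ 1` and every
`f : {-1,1}^n → ℝ`, `D(f,f) ≥ (1/n)·Ent(f²)`. -/
theorem cube_logSobolev (n : ℕ) (hn : 1 ≤ n) (f : (Fin n → Bool) → ℝ) :
    (1 / (n : ℝ)) * cubeEntropy (fun x => f x ^ 2) ≤ dirichletForm f f :=
  cube_logSobolev_general n f
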